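/- Let A be a Noetherian local ring with unmixed component U of the zero ideal (the intersection of the primary components of (0) belonging to primes p with dim A/p = dim A). Then there exists an injective A-module homomorphism from A/U into A. -/

import Mathlib

open IsLocalRing CategoryTheory

noncomputable section

/-- The maximal length bound notion of depth: supremum of lengths of regular sequences
contained in the maximal ideal. -/
noncomputable def moduleDepth (A : Type) [CommRing A] [IsLocalRing A]
    (M : Type) [AddCommGroup M] [Module A M] : ℕ∞ :=
  sSup {n : ℕ∞ | ∃ rs : List A, (rs.length : ℕ∞) = n ∧
    (∀ r ∈ rs, r ∈ IsLocalRing.maximalIdeal A) ∧ RingTheory.Sequence.IsRegular M rs}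

/-- A Noetherian local ring is Cohen-Macaulay if its depth equals its Krull dimension. -/
def IsCohenMacaulayLocalRing (A : Type) [CommRing A] [IsLocalRing A] : Prop :=
  (moduleDepth A A : WithBot ℕ∞) = ringKrullDim A

/-- `E` is an injective hull of the residue field of the local ring `A`. -/
def IsInjectiveHullOfResidueField (A : Type) [CommRing A] [IsLocalRing A]
    (E : Type) [AddCommGroup E] [Module A E] : Prop :=
  Module.Injective A E ∧ ∃ f : IsLocalRing.ResidueField A →ₗ[A] E,
    Function.Injective f ∧ ∀ N : Submodule A E, N ≠ ⊥ → N ⊓ LinearMap.range f ≠ ⊥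

/-- `K` is a canonical module of the local ring `A`:  it is finitely generated and
its Matlis dual `Hom_A(K, E)` is isomorphic to the top local cohomology `H^d_m(A)`. -/
def IsCanonicalModule (A : Type) [CommRing A] [IsLocalRing A]
    (K : Type) [AddCommGroup K] [Module A K] : Prop :=
  Module.Finite A K ∧ ∀ d : ℕ, ringKrullDim A = d →
    ∀ (E : Type) [AddCommGroup E] [Module A E], IsInjectiveHullOfResidueField A E →
      Nonempty ((K →ₗ[A] E) ≃ₗ[A]
        ((localCohomology (IsLocalRing.maximalIdeal A) d).obj (ModuleCat.of A A)))

/-- Gorenstein local ring: Cohen-Macaulay and a canonical module of itself. -/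
def IsGorensteinLocalRing (A : Type) [CommRing A] [IsLocalRing A] : Prop :=
  IsCohenMacaulayLocalRing A ∧ IsCanonicalModule A A

/-- `Assh A`: the set of primes `p` with `dim A/p = dim A`. -/
def asshSet (A : Type) [CommRing A] : Set (Ideal A) :=
  {p | p.IsPrime ∧ ringKrullDim (A ⧸ p) = ringKrullDim A}

/-- The `p`-primary component of `(0)` for a minimal prime `p`, i.e. the kernel of
`A → A_p`. -/
noncomputable def primaryComponentOfZero (A : Type) [CommRing A] (p : Ideal A) : Ideal A :=
  ⨆ s ∈ {s : A | s ∉ p}, LinearMap.ker (LinearMap.lsmul A A s)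

/-- The unmixed component `U` of `(0)` in `A`. -/
noncomputable def unmixedComponent (A : Type) [CommRing A] : Ideal A :=
  ⨅ p ∈ asshSet A, primaryComponentOfZero A p

/-- `M` is a `q`-th syzygy module: there is an exact sequence
`0 → M → F₁ → ⋯ → F_q` with each `F_i` finite free. -/
def IsQSyzygy (A : Type) [CommRing A] :
    ℕ → (M : Type) → [AddCommGroup M] → [Module A M] → Prop
  | 0, _, _, _ => True
  | q + 1, M, _, _ => ∃ (n : ℕ) (f : M →ₗ[A] (Fin n → A)), Function.Injective f ∧
      IsQSyzygy A q ((Fin n → A) ⧸ LinearMap.range f)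

/-- Vanishing of `Ext^i_A(M, A)`. -/
def ExtVanishes (A : Type) [CommRing A] (M : Type) [AddCommGroup M] [Module A M]
    (i : ℕ) : Prop :=
  Subsingleton (((Ext A (ModuleCat A) i).obj (Opposite.op (ModuleCat.of A M))).obj
    (ModuleCat.of A A))

/-- `M` is `q`-torsionfree: `Ext^i_A(D(M), A) = 0` for `1 ≤ i ≤ q`, where `D(M)`
is the Auslander transpose of `M`. -/
def IsQTorsionfree (A : Type) [CommRing A] (M : Type) [AddCommGroup M] [Module A M]
    (q : ℕ) : Prop :=
  ∃ (n m : ℕ) (σ : (Fin m → A) →ₗ[A] (Fin n → A)) (π : (Fin n → A) →ₗ[A] M),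
    Function.Surjective π ∧ LinearMap.range σ = LinearMap.ker π ∧
    ∀ i : ℕ, 1 ≤ i → i ≤ q →
      ExtVanishes A ((Module.Dual A (Fin m → A)) ⧸ LinearMap.range σ.dualMap) i

/-- `M` is torsionless if the canonical evaluation map `M → M**` is injective. -/
def IsTorsionless (A : Type) [CommRing A] (M : Type) [AddCommGroup M] [Module A M] : Prop :=
  Function.Injective (Module.Dual.eval A M)

end


section AuxAss

variable {R : Type*} [CommRing R] {M : Type*} [AddCommGroup M] [Module R M]

/-- Associated primes of a module are associated primes of a submodule or of the quotient. -/
theorem aux_ass_subset_union (N : Submodule R M) :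
    associatedPrimes R M ⊆ associatedPrimes R N ∪ associatedPrimes R (M ⧸ N) := by
  exact associatedPrimes.subset_union_of_exact (f := N.subtype) (g := N.mkQ) N.injective_subtype
    (LinearMap.exact_subtype_mkQ N)

/-- The associated primes of a cyclic module `R ∙ v` whose annihilator is prime. -/
theorem aux_ass_span_singleton (v : M) (hq : ((R ∙ v)).annihilator.IsPrime) :
    associatedPrimes R ↥(R ∙ v) ⊆ {(R ∙ v).annihilator} := by
  rintro q' ⟨hq', y, rfl⟩
  obtain ⟨r, hr⟩ := Submodule.mem_span_singleton.mp y.2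
  have hy0 : (y : M) ≠ 0 := by
    intro h0
    apply hq'.ne_top
    have : y = 0 := Subtype.ext h0
    rw [this, Submodule.colon_singleton_zero, Ideal.radical_top]
  have hrq : r ∉ (R ∙ v).annihilator := by
    rw [Submodule.mem_annihilator_span_singleton]
    intro h; exact hy0 (hr ▸ h)
  simp only [Set.mem_singleton_iff]
  suffices hcol : (⊥ : Submodule R ↥(R ∙ v)).colon {y} = (R ∙ v).annihilator by
    rw [hcol]; exact hq.radical
  ext s
  rw [Submodule.mem_colon_singleton, Submodule.mem_bot]
  simp only [Submodule.mem_annihilator_span_singleton]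
  rw [show (s • y = 0) ↔ s • (y : M) = 0 by
    rw [← Submodule.mk_eq_zero (R ∙ v) ((R ∙ v).smul_mem s y.2)]
    exact Iff.of_eq (congrArg (· = 0) (congrArg _ (Subtype.ext rfl)))]
  rw [← hr, ← mul_smul]
  constructor
  · intro hs
    have hsr : s * r ∈ (R ∙ v).annihilator := by
      rw [Submodule.mem_annihilator_span_singleton]; exact hs
    rcases hq.mem_or_mem hsr with h1 | h1
    · rwa [Submodule.mem_annihilator_span_singleton] at h1
    · exact absurd h1 hrq
  · intro hs
    rw [mul_smul, smul_comm, hs, smul_zero]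

/-- Finiteness of the set of associated primes of a Noetherian module. -/
theorem aux_associatedPrimes_finite (R M : Type*) [CommRing R] [IsNoetherianRing R]
    [AddCommGroup M] [Module R M] [IsNoetherian R M] :
    (associatedPrimes R M).Finite := by
  by_contra hM
  have hS : ({N : Submodule R M | ¬ (associatedPrimes R (M ⧸ N)).Finite}).Nonempty := by
    refine ⟨⊥, fun h => hM ?_⟩
    rwa [LinearEquiv.AssociatedPrimes.eq (Submodule.quotEquivOfEqBot ⊥ rfl).symm]
  obtain ⟨N, hN, hmax⟩ := (set_has_maximal_iff_noetherian.mpr ‹IsNoetherian R M›) _ hS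
  have hnt : Nontrivial (M ⧸ N) := by
    by_contra h
    rw [not_nontrivial_iff_subsingleton] at h
    exact hN (by rw [associatedPrimes.eq_empty_of_subsingleton]; exact Set.finite_empty)
  obtain ⟨q, hq⟩ := associatedPrimes.nonempty R (M ⧸ N)
  obtain ⟨hqp, v, hv⟩ := isAssociatedPrime_iff.mp hq
  have hv0 : v ≠ 0 := by
    intro h0
    apply hqp.ne_top
    rw [hv, h0, Submodule.colon_singleton_zero]
  obtain ⟨xv, hxv⟩ := N.mkQ_surjective v
  set N' := Submodule.comap N.mkQ (R ∙ v) with hN'def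
  have hle : N ≤ N' := by
    intro n hn
    have : N.mkQ n = 0 := by rwa [Submodule.mkQ_apply, Submodule.Quotient.mk_eq_zero]
    simp only [hN'def, Submodule.mem_comap, this]
    exact Submodule.zero_mem _
  have hNN' : N < N' := by
    refine lt_of_le_of_ne hle (fun h => ?_)
    have hxvN' : xv ∈ N' := by
      simp only [hN'def, Submodule.mem_comap, hxv]
      exact Submodule.mem_span_singleton_self v
    rw [← h] at hxvN'
    apply hv0
    rw [← hxv, Submodule.mkQ_apply, Submodule.Quotient.mk_eq_zero]
    exact hxvN'
  have hN'fin : (associatedPrimes R (M ⧸ N')).Finite := by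
    by_contra h; exact hmax N' h hNN'
  have hmap : N'.map N.mkQ = (R ∙ v) :=
    Submodule.map_comap_eq_of_surjective N.mkQ_surjective _
  have e : ((M ⧸ N) ⧸ ((R ∙ v) : Submodule R (M ⧸ N))) ≃ₗ[R] M ⧸ N' :=
    hmap ▸ Submodule.quotientQuotientEquivQuotient N N' hle
  apply hN
  have h1 := aux_ass_subset_union (R := R) (M := M ⧸ N) (R ∙ v)
  have h2 : associatedPrimes R ↥((R ∙ v) : Submodule R (M ⧸ N)) ⊆ {(R ∙ v).annihilator} :=
    aux_ass_span_singleton v (by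
      have e : (R ∙ v).annihilator = q := by
        rw [hv]; ext s
        rw [Submodule.mem_annihilator_span_singleton, Submodule.mem_colon_singleton, Submodule.mem_bot]
      exact e ▸ hqp)
  have h3 : associatedPrimes R ((M ⧸ N) ⧸ ((R ∙ v) : Submodule R (M ⧸ N)))
      = associatedPrimes R (M ⧸ N') := LinearEquiv.AssociatedPrimes.eq e
  exact ((Set.finite_singleton _).union (h3 ▸ hN'fin)).subset
    (h1.trans (Set.union_subset_union h2 (le_refl _)))

end AuxAss

section AuxMain

variable {A : Type} [CommRing A]

theorem aux_mem_primaryComponentOfZero {p : Ideal A} (hp : p.IsPrime) {a : A} :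
    a ∈ primaryComponentOfZero A p ↔ ∃ s, s ∉ p ∧ s * a = 0 := by
  have hne : Nonempty {s : A // s ∈ {s : A | s ∉ p}} :=
    ⟨⟨1, fun h => hp.ne_top ((Ideal.eq_top_iff_one _).mpr h)⟩⟩
  have hdir : Directed (· ≤ ·)
      (fun s : {s : A // s ∈ {s : A | s ∉ p}} => LinearMap.ker (LinearMap.lsmul A A s.1)) := by
    rintro ⟨s, hs⟩ ⟨t, ht⟩
    refine ⟨⟨s * t, fun h => (hp.mem_or_mem h).elim hs ht⟩, ?_, ?_⟩
    · intro a ha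
      simp only [LinearMap.mem_ker, LinearMap.lsmul_apply, smul_eq_mul] at ha ⊢
      rw [show s * t * a = t * (s * a) by ring, ha, mul_zero]
    · intro a ha
      simp only [LinearMap.mem_ker, LinearMap.lsmul_apply, smul_eq_mul] at ha ⊢
      rw [show s * t * a = s * (t * a) by ring, ha, mul_zero]
  unfold primaryComponentOfZero
  rw [iSup_subtype', Submodule.mem_iSup_of_directed _ hdir]
  constructor
  · rintro ⟨⟨s, hs⟩, h⟩
    refine ⟨s, hs, ?_⟩
    simpa only [LinearMap.mem_ker, LinearMap.lsmul_apply, smul_eq_mul] using h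
  · rintro ⟨s, hs, h⟩
    exact ⟨⟨s, hs⟩, by simpa only [LinearMap.mem_ker, LinearMap.lsmul_apply, smul_eq_mul] using h⟩

theorem aux_unmixed_le {p : Ideal A} (hp : p ∈ asshSet A) :
    unmixedComponent A ≤ primaryComponentOfZero A p :=
  iInf₂_le p hp

/-- For each prime in `Assh A` there is an element outside it annihilating `U`. -/
theorem aux_exists_ann [IsNoetherianRing A] {q : Ideal A} (hq : q ∈ asshSet A) :
    ∃ s, s ∉ q ∧ ∀ u ∈ unmixedComponent A, s * u = 0 := by
  classical
  obtain ⟨S, hS⟩ := (IsNoetherian.noetherian (unmixedComponent A) : (unmixedComponent A).FG)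
  have hmem : ∀ u : {u // u ∈ S}, ∃ s, s ∉ q ∧ s * u.1 = 0 := by
    intro u
    refine (aux_mem_primaryComponentOfZero hq.1).mp (aux_unmixed_le hq ?_)
    rw [← hS]
    exact Submodule.subset_span u.2
  choose f hf1 hf2 using hmem
  haveI := hq.1
  refine ⟨∏ u ∈ S.attach, f u, ?_, ?_⟩
  · exact q.primeCompl.prod_mem (fun u _ => hf1 u)
  · intro u hu
    have hspan : (Submodule.span A (S : Set A)) ≤
        LinearMap.ker (LinearMap.lsmul A A (∏ u ∈ S.attach, f u)) := by
      rw [Submodule.span_le]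
      intro y hy
      have hyS : y ∈ S := hy
      rw [SetLike.mem_coe, LinearMap.mem_ker, LinearMap.lsmul_apply, smul_eq_mul,
        ← Finset.mul_prod_erase S.attach f (Finset.mem_attach S ⟨y, hyS⟩), mul_right_comm,
        hf2 ⟨y, hyS⟩, zero_mul]
    have := hspan (by rw [hS]; exact hu)
    simpa only [LinearMap.mem_ker, LinearMap.lsmul_apply, smul_eq_mul] using this

end AuxMain

theorem statement0 (A : Type) [CommRing A] [IsNoetherianRing A] [IsLocalRing A] :
    ∃ f : (A ⧸ unmixedComponent A) →ₗ[A] A, Function.Injective f  := by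
  classical
  set U := unmixedComponent A with hUdef
  -- The finite set of "bad" primes to avoid
  set T : Set (Ideal A) := associatedPrimes A (A ⧸ U) ∩ asshSet A with hTdef
  have hTfin : T.Finite := by
    have : IsNoetherian A (A ⧸ U) := inferInstance
    exact (aux_associatedPrimes_finite A (A ⧸ U)).inter_of_left _
  -- choose x ∈ ann U avoiding all primes in T
  have hJq : ∀ q ∈ T, ¬ (Submodule.annihilator (U : Submodule A A)) ≤ q := by
    intro q hqT hle
    obtain ⟨s, hs, hann⟩ := aux_exists_ann (A := A) hqT.2
    apply hs
    apply hle
    rw [Submodule.mem_annihilator]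
    intro u hu
    rw [smul_eq_mul]
    exact hann u hu
  obtain ⟨x, hxJ, hxT⟩ : ∃ x ∈ Submodule.annihilator (U : Submodule A A), ∀ q ∈ T, x ∉ q := by
    have hnotsub : ¬ ((Submodule.annihilator (U : Submodule A A) : Set A) ⊆
        ⋃ i ∈ (↑hTfin.toFinset : Set (Ideal A)), (i : Set A)) := by
      rw [Ideal.subset_union_prime (⊤ : Ideal A) (⊤ : Ideal A) (fun i hi _ _ => by
        rw [Set.Finite.mem_toFinset] at hi
        exact hi.2.1)]
      rintro ⟨i, hi, hle⟩
      rw [Set.Finite.mem_toFinset] at hi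
      exact hJq i hi hle
    rw [Set.not_subset] at hnotsub
    obtain ⟨x, hx1, hx2⟩ := hnotsub
    refine ⟨x, hx1, fun q hq hxq => hx2 ?_⟩
    exact Set.mem_biUnion (show q ∈ (↑hTfin.toFinset : Set (Ideal A)) by
      rw [Set.Finite.coe_toFinset]; exact hq) hxq
  -- the map
  have hUker : U ≤ LinearMap.ker (LinearMap.lsmul A A x) := by
    intro u hu
    rw [LinearMap.mem_ker, LinearMap.lsmul_apply]
    rw [Submodule.mem_annihilator] at hxJ
    exact hxJ u hu
  refine ⟨Submodule.liftQ U (LinearMap.lsmul A A x) hUker, ?_⟩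
  rw [← LinearMap.ker_eq_bot]
  by_contra hker
  set K := LinearMap.ker (Submodule.liftQ U (LinearMap.lsmul A A x) hUker) with hKdef
  haveI : Nontrivial K := Submodule.nontrivial_iff_ne_bot.mpr hker
  obtain ⟨q, hq⟩ := associatedPrimes.nonempty A K
  have hqM : q ∈ associatedPrimes A (A ⧸ U) :=
    associatedPrimes.subset_of_injective (Submodule.injective_subtype K) hq
  obtain ⟨hqp, y, hy⟩ := isAssociatedPrime_iff.mp hq
  have hy0 : (y : A ⧸ U) ≠ 0 := by
    intro h0
    apply hqp.ne_top
    have : y = 0 := Subtype.ext h0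
    rw [hy, this, Submodule.colon_singleton_zero]
  obtain ⟨a, ha⟩ := U.mkQ_surjective (y : A ⧸ U)
  have haU : a ∉ U := by
    intro h
    apply hy0
    rw [← ha, Submodule.mkQ_apply, Submodule.Quotient.mk_eq_zero]
    exact h
  -- x ∈ q
  have hxq : x ∈ q := by
    rw [hy, Submodule.mem_colon_singleton, Submodule.mem_bot]
    have hyK : Submodule.liftQ U (LinearMap.lsmul A A x) hUker (y : A ⧸ U) = 0 :=
      LinearMap.mem_ker.mp y.2
    rw [← ha, Submodule.mkQ_apply, Submodule.liftQ_apply, LinearMap.lsmul_apply,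
      smul_eq_mul] at hyK
    apply Subtype.ext
    show x • (y : A ⧸ U) = 0
    rw [← ha, Submodule.mkQ_apply, ← Submodule.Quotient.mk_smul, smul_eq_mul,
      Submodule.Quotient.mk_eq_zero, hyK]
    exact U.zero_mem
  -- a prime p in Assh with a ∉ primary component
  obtain ⟨p, hp, hap⟩ : ∃ p ∈ asshSet A, a ∉ primaryComponentOfZero A p := by
    by_contra h
    push_neg at h
    apply haU
    rw [hUdef]
    unfold unmixedComponent
    rw [Submodule.mem_iInf]
    intro i
    rw [Submodule.mem_iInf]
    intro hi
    exact h i hi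
  -- q ≤ p
  have hqlep : q ≤ p := by
    intro t ht
    by_contra htp
    have hty : t • (y : A ⧸ U) = 0 := by
      have h1 : t • y = 0 := by
        rw [hy, Submodule.mem_colon_singleton, Submodule.mem_bot] at ht
        exact ht
      calc t • (y : A ⧸ U) = ((t • y : ↥K) : A ⧸ U) := rfl
        _ = 0 := by rw [h1]; rfl
    have htaU : t * a ∈ U := by
      rw [← Submodule.Quotient.mk_eq_zero,
        show Submodule.Quotient.mk (t * a) = t • (y : A ⧸ U) by
          rw [← ha, Submodule.mkQ_apply, ← Submodule.Quotient.mk_smul, smul_eq_mul]]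
      exact hty
    have : t * a ∈ primaryComponentOfZero A p := aux_unmixed_le hp htaU
    obtain ⟨s, hs, hsa⟩ := (aux_mem_primaryComponentOfZero hp.1).mp this
    apply hap
    refine (aux_mem_primaryComponentOfZero hp.1).mpr ⟨s * t, ?_, by
      rw [mul_assoc]; exact hsa⟩
    intro h
    rcases hp.1.mem_or_mem h with h1 | h1
    · exact hs h1
    · exact htp h1
  -- q ∈ asshSet
  have hqassh : q ∈ asshSet A := by
    refine ⟨hqp, le_antisymm (ringKrullDim_quotient_le q) ?_⟩
    rw [← hp.2]
    exact ringKrullDim_le_of_surjective (Ideal.Quotient.factor hqlep)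
      (fun b => by
        obtain ⟨c, rfl⟩ := Ideal.Quotient.mk_surjective b
        exact ⟨Ideal.Quotient.mk q c, rfl⟩)
  exact hxT q ⟨hqM, hqassh⟩ hxq
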